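/- arXiv:2512.04932 — 2 statements merged into one kernel-verified Lean document; each statement's English description precedes it below -/
import Mathlib

section
/- Let X be a linear order that is strongly augmentable on the right by Y, i.e. X ⪯ X + Y for the natural inclusion with Y non-empty. Then X ⪯ X + Σ_ζ Y, where Σ_ζ Y denotes the sum of copies of Y indexed by the integers with their usual order. -/
/-!
Ehrenfeucht–Fraïssé games. A position is a relation between two linear orders, the pairs played
so far. If Duplicator wins the `n`-round game from `S`, then tuples paired by `S` satisfy the same
formulas of low quantifier rank. Conversely, Hintikka formulas turn `X ⪯ X + Y` into winning
strategies between `X + Y` and `X` from every finite set of pairs `(x, x)`.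

Games add up along lexicographic sums and compose. So a finite winning position between `X + B`
and `X` stays winning after inserting a copy of `Y` right after `X`, and after appending one at the
far right. Starting from `X`, this gives winning positions for the windows
`X + Σ_{[-k, k)} Y ⊆ X + Σ_ζ Y`. Every point of `X + Σ_ζ Y` lies in some window, so Duplicator wins
between `X + Σ_ζ Y` and `X`: whenever Spoiler plays outside the current window, Duplicator passes
to a larger one. This is Tarski's elementary chain argument in game form.
-/

open FirstOrder Language

attribute [instance] FirstOrder.Language.orderStructure

universe u

/-- `f : M → N` is an elementary inclusion: it preserves and reflects all first-order
formulas of the language `L`. -/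
def IsElemInclusion (L : FirstOrder.Language) (M : Type*) (N : Type*) [L.Structure M]
    [L.Structure N] (f : M → N) : Prop :=
  ∀ (n : ℕ) (φ : L.Formula (Fin n)) (v : Fin n → M),
    φ.Realize (f ∘ v) ↔ φ.Realize v

open scoped SetRel

instance {M : Type*} [LE M] : Language.order.OrderedStructure M := ⟨fun _ => Iff.rfl⟩

section Game

variable {M N P : Type*}

/-- `S` is the set of pairs played so far. -/
def DuplicatorWins [LE M] [LE N] : ℕ → SetRel M N → Prop
  | 0, S => ∀ p ∈ S, ∀ q ∈ S, p.1 ≤ q.1 ↔ p.2 ≤ q.2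
  | n + 1, S => (∀ a, ∃ b, DuplicatorWins n (insert (a, b) S)) ∧
      ∀ b, ∃ a, DuplicatorWins n (insert (a, b) S)

namespace DuplicatorWins

section LE

variable [LE M] [LE N] [LE P] {n : ℕ} {S T : SetRel M N}

theorem anti (h : DuplicatorWins n S) (hTS : T ⊆ S) : DuplicatorWins n T := by
  induction n generalizing S T with
  | zero => exact fun p hp q hq => h p (hTS hp) q (hTS hq)
  | succ n ih =>
    refine ⟨fun a => ?_, fun b => ?_⟩
    · obtain ⟨b, hb⟩ := h.1 a
      exact ⟨b, ih hb (Set.insert_subset_insert hTS)⟩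
    · obtain ⟨a, ha⟩ := h.2 b
      exact ⟨a, ih ha (Set.insert_subset_insert hTS)⟩

theorem le_iff_le (h : DuplicatorWins n S) {a a' : M} {b b' : N} (hab : (a, b) ∈ S)
    (hab' : (a', b') ∈ S) : a ≤ a' ↔ b ≤ b' := by
  induction n generalizing S with
  | zero => exact h _ hab _ hab'
  | succ n ih =>
    obtain ⟨_, hb⟩ := h.1 a
    exact ih hb (Set.mem_insert_of_mem _ hab) (Set.mem_insert_of_mem _ hab')

theorem of_succ (h : DuplicatorWins (n + 1) S) : DuplicatorWins n S := by
  rcases isEmpty_or_nonempty M with hM | ⟨⟨a⟩⟩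
  · rcases isEmpty_or_nonempty N with hN | ⟨⟨b⟩⟩
    · cases n <;> simp [DuplicatorWins]
    · exact isEmptyElim (h.2 b).choose
  · obtain ⟨b, hb⟩ := h.1 a
    exact hb.anti (Set.subset_insert _ _)

theorem mono {m : ℕ} (h : DuplicatorWins n S) (hmn : m ≤ n) : DuplicatorWins m S := by
  induction n, hmn using Nat.le_induction with
  | base => exact h
  | succ n _ ih => exact ih h.of_succ

theorem comp {T : SetRel N P} (hS : DuplicatorWins n S) (hT : DuplicatorWins n T) :
    DuplicatorWins n (S ○ T) := by
  induction n generalizing S T with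
  | zero =>
    rintro ⟨a, c⟩ ⟨b, hab, hbc⟩ ⟨a', c'⟩ ⟨b', hab', hbc'⟩
    exact (hS _ hab _ hab').trans (hT _ hbc _ hbc')
  | succ n ih =>
    refine ⟨fun a => ?_, fun c => ?_⟩
    · obtain ⟨b, hb⟩ := hS.1 a
      obtain ⟨c, hc⟩ := hT.1 b
      refine ⟨c, (ih hb hc).anti ?_⟩
      rintro _ (rfl | ⟨b', hab', hb'c⟩)
      exacts [⟨b, .inl rfl, .inl rfl⟩, ⟨b', .inr hab', .inr hb'c⟩]
    · obtain ⟨b, hb⟩ := hT.2 c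
      obtain ⟨a, ha⟩ := hS.2 b
      refine ⟨a, (ih ha hb).anti ?_⟩
      rintro _ (rfl | ⟨b', hab', hb'c⟩)
      exacts [⟨b, .inl rfl, .inl rfl⟩, ⟨b', .inr hab', .inr hb'c⟩]

end LE

theorem graph_orderIso [Preorder M] [Preorder N] (e : M ≃o N) (n : ℕ) :
    DuplicatorWins n (e : M → N).graph := by
  induction n with
  | zero =>
    rintro ⟨a, _⟩ rfl ⟨a', _⟩ rfl
    exact e.le_iff_le.symm
  | succ n ih =>
    refine ⟨fun a => ⟨e a, ih.anti ?_⟩, fun b => ⟨e.symm b, ih.anti ?_⟩⟩ <;>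
      rintro _ (rfl | h)
    · rfl
    · exact h
    · exact e.apply_symm_apply b
    · exact h

end DuplicatorWins

end Game

section SumLex

variable {A A' B B' : Type*}

def SetRel.sumLex (R : SetRel A A') (S : SetRel B B') : SetRel (A ⊕ₗ B) (A' ⊕ₗ B') :=
  Prod.map (toLex ∘ Sum.inl) (toLex ∘ Sum.inl) '' R ∪
    Prod.map (toLex ∘ Sum.inr) (toLex ∘ Sum.inr) '' S

theorem SetRel.sumLex_insert_left (R : SetRel A A') (S : SetRel B B') (a : A) (a' : A') :
    (insert (a, a') R).sumLex S = insert (toLex (.inl a), toLex (.inl a')) (R.sumLex S) := by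
  simp [SetRel.sumLex, Set.image_insert_eq, Set.insert_union]

theorem SetRel.sumLex_insert_right (R : SetRel A A') (S : SetRel B B') (b : B) (b' : B') :
    R.sumLex (insert (b, b') S) = insert (toLex (.inr b), toLex (.inr b')) (R.sumLex S) := by
  simp [SetRel.sumLex, Set.image_insert_eq, Set.union_insert]

variable [LE A] [LE A'] [LE B] [LE B']

theorem DuplicatorWins.sumLex {n : ℕ} {R : SetRel A A'} {S : SetRel B B'}
    (hR : DuplicatorWins n R) (hS : DuplicatorWins n S) : DuplicatorWins n (R.sumLex S) := by
  induction n generalizing R S with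
  | zero =>
    rintro _ (⟨⟨a, a'⟩, ha, rfl⟩ | ⟨⟨b, b'⟩, hb, rfl⟩) _ (⟨⟨c, c'⟩, hc, rfl⟩ | ⟨⟨d, d'⟩, hd, rfl⟩)
    · simpa using hR _ ha _ hc
    · simp
    · simp
    · simpa using hS _ hb _ hd
  | succ n ih =>
    refine ⟨fun z => ?_, fun z' => ?_⟩
    · rcases z with a | b
      · obtain ⟨a', ha'⟩ := hR.1 a
        exact ⟨toLex (.inl a'), R.sumLex_insert_left S a a' ▸ ih ha' hS.of_succ⟩
      · obtain ⟨b', hb'⟩ := hS.1 b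
        exact ⟨toLex (.inr b'), R.sumLex_insert_right S b b' ▸ ih hR.of_succ hb'⟩
    · rcases z' with a' | b'
      · obtain ⟨a, ha⟩ := hR.2 a'
        exact ⟨toLex (.inl a), R.sumLex_insert_left S a a' ▸ ih ha hS.of_succ⟩
      · obtain ⟨b, hb⟩ := hS.2 b'
        exact ⟨toLex (.inr b), R.sumLex_insert_right S b b' ▸ ih hR.of_succ hb⟩

end SumLex

theorem FirstOrder.Language.order.term_eq_var {β : Type*} :
    ∀ t : Language.order.Term β, ∃ s, t = Term.var s
  | .var s => ⟨s, rfl⟩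
  | .func f _ => isEmptyElim f

theorem DuplicatorWins.realize_term_le_iff {M N : Type*} [LE M] [LE N] {n : ℕ} {S : SetRel M N}
    (hS : DuplicatorWins n S) {α : Type*} {c : ℕ} {v : α → M} {w : α → N} {xs : Fin c → M}
    {ys : Fin c → N} (hv : ∀ a, (v a, w a) ∈ S) (hxs : ∀ i, (xs i, ys i) ∈ S)
    (t t' : Language.order.Term (α ⊕ Fin c)) :
    t.realize (Sum.elim v xs) ≤ t'.realize (Sum.elim v xs) ↔
      t.realize (Sum.elim w ys) ≤ t'.realize (Sum.elim w ys) := by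
  have hpair : ∀ s, (Sum.elim v xs s, Sum.elim w ys s) ∈ S := by
    rintro (a | i)
    exacts [hv a, hxs i]
  obtain ⟨s, rfl⟩ := Language.order.term_eq_var t
  obtain ⟨s', rfl⟩ := Language.order.term_eq_var t'
  exact hS.le_iff_le (hpair s) (hpair s')

theorem exists_realize_iff_of_duplicatorWins {α : Type*} {c : ℕ}
    (φ : Language.order.BoundedFormula α c) :
    ∃ n, ∀ {M N : Type*} [PartialOrder M] [PartialOrder N] {S : SetRel M N},
      DuplicatorWins n S → ∀ {v : α → M} {w : α → N} {xs : Fin c → M} {ys : Fin c → N},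
      (∀ a, (v a, w a) ∈ S) → (∀ i, (xs i, ys i) ∈ S) → (φ.Realize v xs ↔ φ.Realize w ys) := by
  induction φ with
  | falsum => exact ⟨0, fun _ _ _ _ _ _ _ => Iff.rfl⟩
  | equal t t' =>
    refine ⟨0, fun hS v w xs ys hv hxs => ?_⟩
    simp only [BoundedFormula.Realize, le_antisymm_iff, hS.realize_term_le_iff hv hxs]
  | rel R ts =>
    cases R
    exact ⟨0, fun hS v w xs ys hv hxs => hS.realize_term_le_iff hv hxs (ts 0) (ts 1)⟩
  | imp f g ihf ihg =>
    obtain ⟨m, hm⟩ := ihf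
    obtain ⟨k, hk⟩ := ihg
    refine ⟨max m k, fun hS v w xs ys hv hxs => ?_⟩
    exact imp_congr (hm (hS.mono (le_max_left m k)) hv hxs)
      (hk (hS.mono (le_max_right m k)) hv hxs)
  | all f ih =>
    obtain ⟨m, hm⟩ := ih
    refine ⟨m + 1, ?_⟩
    intro M N _ _ S hS v w xs ys hv hxs
    have hv' : ∀ {p}, ∀ a, (v a, w a) ∈ insert p S := fun a => Set.mem_insert_of_mem _ (hv a)
    have hsnoc : ∀ {a : M} {b : N} (i : Fin (_ + 1)),
        (Fin.snoc (α := fun _ => M) xs a i, Fin.snoc (α := fun _ => N) ys b i) ∈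
          insert (a, b) S := by
      intro a b i
      refine Fin.lastCases ?_ (fun j => ?_) i
      · simp
      · simpa using Or.inr (hxs j)
    constructor
    · intro h b
      obtain ⟨a, hab⟩ := hS.2 b
      exact (hm hab hv' hsnoc).mp (h a)
    · intro h a
      obtain ⟨b, hab⟩ := hS.1 a
      exact (hm hab hv' hsnoc).mpr (h b)

section Hintikka

open BoundedFormula
open scoped Classical

variable {c : ℕ}

noncomputable def leDiagram (g : Fin c → Fin c → Bool) : Language.order.BoundedFormula Empty c :=
  iInf fun p : Fin c × Fin c =>
    let φ : Language.order.BoundedFormula Empty c :=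
      (Term.var (Sum.inr p.1)).le (Term.var (Sum.inr p.2))
    if g p.1 p.2 then φ else ∼φ

theorem realize_leDiagram {M : Type*} [LE M] (g : Fin c → Fin c → Bool) (v : Empty → M)
    (xs : Fin c → M) : (leDiagram g).Realize v xs ↔ ∀ i j, (xs i ≤ xs j ↔ g i j) := by
  refine realize_iInf.trans (Prod.forall.trans (forall₂_congr fun i j => ?_))
  cases g i j <;> simp

noncomputable def hintikkaStep (S : Finset (Language.order.BoundedFormula Empty (c + 1))) :
    Language.order.BoundedFormula Empty c :=
  (iInf fun ψ : S => ψ.1.ex) ⊓ (iSup fun ψ : S => ψ.1).all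

theorem realize_hintikkaStep {M : Type*} [LE M]
    (S : Finset (Language.order.BoundedFormula Empty (c + 1))) (v : Empty → M) (xs : Fin c → M) :
    (hintikkaStep S).Realize v xs ↔ (∀ ψ ∈ S, ∃ a, ψ.Realize v (Fin.snoc xs a)) ∧
      ∀ a, ∃ ψ ∈ S, ψ.Realize v (Fin.snoc xs a) := by
  simp [hintikkaStep]

/-- A finite set containing `hintikka n w` for every order and every `w : Fin c → N`: it bounds
the conjunctions and disjunctions in `hintikka`. -/
noncomputable def hintikkaSet : ℕ → (c : ℕ) → Finset (Language.order.BoundedFormula Empty c)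
  | 0, _ => Finset.univ.image leDiagram
  | n + 1, c => (hintikkaSet n (c + 1)).powerset.image hintikkaStep

noncomputable def hintikka {N : Type*} [LE N] :
    ℕ → {c : ℕ} → (Fin c → N) → Language.order.BoundedFormula Empty c
  | 0, _, w => leDiagram fun i j => decide (w i ≤ w j)
  | n + 1, c, w => hintikkaStep ((hintikkaSet n (c + 1)).filter
      fun ψ => ∃ a, ψ = hintikka n (Fin.snoc (α := fun _ => N) w a))

variable {N M : Type*} [LE N] [LE M]

theorem hintikka_mem_hintikkaSet (n : ℕ) (w : Fin c → N) : hintikka n w ∈ hintikkaSet n c := by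
  cases n with
  | zero => exact Finset.mem_image_of_mem _ (Finset.mem_univ _)
  | succ n => exact Finset.mem_image_of_mem _ (Finset.mem_powerset.mpr (Finset.filter_subset _ _))

theorem realize_hintikka_self (n : ℕ) (v : Empty → N) (w : Fin c → N) :
    (hintikka n w).Realize v w := by
  induction n generalizing c with
  | zero => simp [hintikka, realize_leDiagram]
  | succ n ih =>
    rw [hintikka, realize_hintikkaStep]
    constructor
    · simp only [Finset.mem_filter]
      rintro _ ⟨-, a, rfl⟩
      exact ⟨a, ih _⟩
    · intro a
      exact ⟨_, Finset.mem_filter.mpr ⟨hintikka_mem_hintikkaSet n _, a, rfl⟩, ih _⟩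

theorem duplicatorWins_of_realize_hintikka (n : ℕ) (v : Empty → M) (w : Fin c → N)
    (u : Fin c → M) (h : (hintikka n w).Realize v u) :
    DuplicatorWins n (Set.range fun i => (w i, u i)) := by
  induction n generalizing c with
  | zero =>
    rintro _ ⟨i, rfl⟩ _ ⟨j, rfl⟩
    simpa [hintikka, realize_leDiagram] using ((realize_leDiagram _ v u).mp h i j).symm
  | succ n ih =>
    rw [hintikka, realize_hintikkaStep] at h
    have hsnoc : ∀ (a : N) (b : M), insert (a, b) (Set.range fun i => (w i, u i)) ⊆
        Set.range fun i =>
          (Fin.snoc (α := fun _ => N) w a i, Fin.snoc (α := fun _ => M) u b i) := by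
      rintro a b _ (rfl | ⟨i, rfl⟩)
      exacts [⟨Fin.last c, by simp⟩, ⟨i.castSucc, by simp⟩]
    refine ⟨fun a => ?_, fun b => ?_⟩
    · obtain ⟨b, hb⟩ := h.1 _ (Finset.mem_filter.mpr ⟨hintikka_mem_hintikkaSet n _, a, rfl⟩)
      exact ⟨b, (ih _ _ hb).anti (hsnoc a b)⟩
    · obtain ⟨_, hψ, hb⟩ := h.2 b
      obtain ⟨-, a, rfl⟩ := Finset.mem_filter.mp hψ
      exact ⟨a, (ih _ _ hb).anti (hsnoc a b)⟩

end Hintikka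

/-- Only finite sets of parameters: `ℚ ⪯ ℚ + ℚ`, yet with all of `ℚ` fixed, Spoiler wins by
playing in the second copy. -/
def IsGameElementary {M N : Type*} [LE M] [LE N] (f : M → N) : Prop :=
  ∀ n (s : Set M), s.Finite → DuplicatorWins n ((fun x => (f x, x)) '' s)

theorem IsElemInclusion.isGameElementary {M N : Type*} [LE M] [LE N] {f : M → N}
    (hf : IsElemInclusion Language.order M N f) : IsGameElementary f := by
  intro n s hs
  obtain ⟨c, v, -, rfl⟩ := hs.fin_param
  let F : M ↪ₑ[Language.order] N := ⟨f, fun _ => hf _⟩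
  rw [← Set.range_comp]
  exact duplicatorWins_of_realize_hintikka n Empty.elim (f ∘ v) v
    ((F.map_boundedFormula _ Empty.elim v).mp (realize_hintikka_self n _ (F ∘ v)))

section Band

variable (Y : Type*)

def band (k : ℕ) : Set (ℤ ×ₗ Y) := {t | (ofLex t).1 ∈ Set.Ico (-(k : ℤ)) k}

variable {Y}

@[simp] theorem mem_band {k : ℕ} {t : ℤ ×ₗ Y} :
    t ∈ band Y k ↔ -(k : ℤ) ≤ (ofLex t).1 ∧ (ofLex t).1 < k := Iff.rfl

instance : IsEmpty (band Y 0) := ⟨fun t => by have := mem_band.mp t.2; omega⟩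

def bandSucc (k : ℕ) : (Y ⊕ₗ band Y k) ⊕ₗ Y → band Y (k + 1)
  | Sum.inlₗ (Sum.inlₗ y) => ⟨toLex (-(k + 1 : ℤ), y), by simp; omega⟩
  | Sum.inlₗ (Sum.inrₗ t) => ⟨t, by have := mem_band.mp t.2; simp; omega⟩
  | Sum.inrₗ y => ⟨toLex ((k : ℤ), y), by simp; omega⟩

@[simp] theorem coe_bandSucc_inl_inl (k : ℕ) (y : Y) :
    (bandSucc k (toLex (.inl (toLex (.inl y)))) : ℤ ×ₗ Y) = toLex (-(k + 1 : ℤ), y) := rfl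

@[simp] theorem coe_bandSucc_inl_inr (k : ℕ) (t : band Y k) :
    (bandSucc k (toLex (.inl (toLex (.inr t)))) : ℤ ×ₗ Y) = t := rfl

@[simp] theorem coe_bandSucc_inr (k : ℕ) (y : Y) :
    (bandSucc k (toLex (.inr y)) : ℤ ×ₗ Y) = toLex ((k : ℤ), y) := rfl

theorem bandSucc_surjective (k : ℕ) : Function.Surjective (bandSucc (Y := Y) k) := by
  rintro ⟨t, ht⟩
  induction t with | h t => ?_
  obtain ⟨i, y⟩ := t
  simp only [mem_band, ofLex_toLex] at ht
  by_cases hlo : i < -k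
  · exact ⟨toLex (.inl (toLex (.inl y))), Subtype.ext (by simp; omega)⟩
  by_cases hhi : k ≤ i
  · exact ⟨toLex (.inr y), Subtype.ext (by simp; omega)⟩
  · exact ⟨toLex (.inl (toLex (.inr ⟨toLex (i, y), by simp; omega⟩))), rfl⟩

variable [LinearOrder Y]

theorem bandSucc_strictMono (k : ℕ) : StrictMono (bandSucc (Y := Y) k) := by
  simp only [StrictMono, Lex.forall, Sum.forall, ← Subtype.coe_lt_coe]
  simp [Prod.Lex.toLex_lt_toLex]
  grind

noncomputable def bandSuccIso (k : ℕ) : (Y ⊕ₗ band Y k) ⊕ₗ Y ≃o band Y (k + 1) :=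
  StrictMono.orderIsoOfSurjective _ (bandSucc_strictMono k) (bandSucc_surjective k)

@[simp] theorem coe_bandSuccIso (k : ℕ) : ⇑(bandSuccIso (Y := Y) k) = bandSucc k := rfl

end Band

theorem DuplicatorWins.image_orderIso {M M' N : Type*} [Preorder M] [Preorder M'] [LE N]
    {n : ℕ} {S : SetRel M N} (e : M ≃o M') (h : DuplicatorWins n S) :
    DuplicatorWins n (Prod.map e id '' S) :=
  ((graph_orderIso e.symm n).comp h).anti <| by
    rintro _ ⟨⟨a, b⟩, hab, rfl⟩
    exact ⟨a, e.symm_apply_apply a, hab⟩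

section Insert

variable {X Y : Type*} [Preorder X] [Preorder Y]

theorem DuplicatorWins.image_inl (hXY : IsGameElementary fun x : X => toLex (Sum.inl x : X ⊕ Y))
    {A : Type*} [LE A] {n : ℕ} {S : SetRel A X} (hfin : S.Finite) (hS : DuplicatorWins n S) :
    DuplicatorWins n (Prod.map (fun a => toLex (Sum.inl a : A ⊕ Y)) id '' S) := by
  have hU := hS.sumLex ((graph_orderIso (OrderIso.refl Y) n).anti (Set.empty_subset _))
  refine (hU.comp (hXY n _ (hfin.image Prod.snd))).anti ?_
  rintro _ ⟨⟨a, x⟩, hax, rfl⟩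
  exact ⟨toLex (.inl x), .inl ⟨(a, x), hax, rfl⟩, ⟨x, ⟨(a, x), hax, rfl⟩, rfl⟩⟩

theorem DuplicatorWins.image_sumMap_inl
    (hXY : IsGameElementary fun x : X => toLex (Sum.inl x : X ⊕ Y)) {B : Type*} [Preorder B] {n : ℕ}
    {S : SetRel (X ⊕ₗ B) X} (hfin : S.Finite) (hS : DuplicatorWins n S) :
    DuplicatorWins n (Prod.map
      (fun z => toLex (Sum.map (fun x => toLex (Sum.inl x : X ⊕ Y)) id (ofLex z))) id '' S) := by
  set s := (fun x : X => toLex (Sum.inl x : X ⊕ B)) ⁻¹' (Prod.fst '' S)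
  have hs : s.Finite := (hfin.image _).preimage fun _ _ _ _ h => by simpa using h
  have hT := (hXY n s hs).sumLex (graph_orderIso (OrderIso.refl B) n)
  refine (hT.comp hS).anti ?_
  rintro _ ⟨⟨w, x⟩, hwx, rfl⟩
  refine ⟨w, ?_, hwx⟩
  induction w with | h w => ?_
  rcases w with x₀ | b
  · exact .inl ⟨(toLex (.inl x₀), x₀), ⟨x₀, ⟨_, hwx, rfl⟩, rfl⟩, rfl⟩
  · exact .inr ⟨(b, b), rfl, rfl⟩

end Insert

section Subtype

variable (X : Type*) {C : Type*} [PartialOrder X] [PartialOrder C] (s : Set C)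

def sumLexSubtype : X ⊕ₗ s ↪o X ⊕ₗ C :=
  OrderEmbedding.ofMapLEIff (fun z : X ⊕ₗ s => toLex (Sum.map id Subtype.val (ofLex z))) <| by
    simp [Lex.forall, Sum.forall]

variable {X}

@[simp] theorem sumLexSubtype_inl (x : X) :
    sumLexSubtype X s (toLex (.inl x)) = toLex (.inl x) := rfl

@[simp] theorem sumLexSubtype_inr (t : s) :
    sumLexSubtype X s (toLex (.inr t)) = toLex (.inr t) := rfl

end Subtype

section Window

variable {X Y : Type*} [LinearOrder X] [LinearOrder Y]

variable (X) in
def WindowWins (n k : ℕ) (S : SetRel (X ⊕ₗ (ℤ ×ₗ Y)) X) : Prop :=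
  ∃ S₀ : SetRel (X ⊕ₗ band Y k) X, S₀.Finite ∧ DuplicatorWins n S₀ ∧
    Prod.map (sumLexSubtype X (band Y k)) id '' S₀ = S

noncomputable def windowSuccIso (k : ℕ) :
    ((X ⊕ₗ Y) ⊕ₗ band Y k) ⊕ₗ Y ≃o X ⊕ₗ band Y (k + 1) :=
  (OrderIso.sumLexCongr (OrderIso.sumLexAssoc X Y (band Y k)) (OrderIso.refl Y)).trans <|
    (OrderIso.sumLexAssoc X (Y ⊕ₗ band Y k) Y).trans <|
      OrderIso.sumLexCongr (OrderIso.refl X) (bandSuccIso k)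

theorem WindowWins.succ (hXY : IsGameElementary fun x : X => toLex (Sum.inl x : X ⊕ Y))
    {n k : ℕ} {S : SetRel (X ⊕ₗ (ℤ ×ₗ Y)) X} (hS : WindowWins X n k S) :
    WindowWins X n (k + 1) S := by
  obtain ⟨S₀, hfin, hS₀, rfl⟩ := hS
  refine ⟨_, ((hfin.image _).image _).image _,
    (((hS₀.image_sumMap_inl hXY hfin).image_inl hXY (hfin.image _)).image_orderIso
      (windowSuccIso k)), ?_⟩
  simp only [Set.image_image]
  refine Set.image_congr ?_
  rintro ⟨w, x⟩ -
  induction w with | h w => ?_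
  rcases w with x₀ | t <;> simp [windowSuccIso]

theorem WindowWins.mono (hXY : IsGameElementary fun x : X => toLex (Sum.inl x : X ⊕ Y))
    {n k k' : ℕ} (hkk' : k ≤ k') {S : SetRel (X ⊕ₗ (ℤ ×ₗ Y)) X} (hS : WindowWins X n k S) :
    WindowWins X n k' S := by
  induction k', hkk' using Nat.le_induction with
  | base => exact hS
  | succ k' _ ih => exact ih.succ hXY

theorem exists_mem_range_sumLexSubtype_band (k : ℕ) (z : X ⊕ₗ (ℤ ×ₗ Y)) :
    ∃ k', k ≤ k' ∧ z ∈ Set.range (sumLexSubtype X (band Y k')) := by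
  induction z with | h z => ?_
  rcases z with x | t
  · exact ⟨k, le_rfl, toLex (.inl x), rfl⟩
  · refine ⟨max k ((ofLex t).1.natAbs + 1), le_max_left _ _, toLex (.inr ⟨t, ?_⟩), rfl⟩
    simp only [mem_band]
    omega

theorem WindowWins.duplicatorWins (hXY : IsGameElementary fun x : X => toLex (Sum.inl x : X ⊕ Y))
    {n k : ℕ} {S : SetRel (X ⊕ₗ (ℤ ×ₗ Y)) X} (hS : WindowWins X n k S) :
    DuplicatorWins n S := by
  induction n generalizing k S with
  | zero =>
    obtain ⟨S₀, -, hS₀, rfl⟩ := hS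
    rintro _ ⟨⟨w, x⟩, hw, rfl⟩ _ ⟨⟨w', x'⟩, hw', rfl⟩
    exact (sumLexSubtype X (band Y k)).le_iff_le.trans (hS₀ _ hw _ hw')
  | succ n ih =>
    refine ⟨fun z => ?_, fun x => ?_⟩
    · obtain ⟨k', hkk', w, rfl⟩ := exists_mem_range_sumLexSubtype_band k z
      obtain ⟨S₀, hfin, hS₀, rfl⟩ := hS.mono hXY hkk'
      obtain ⟨x, hx⟩ := hS₀.1 w
      exact ⟨x, ih ⟨_, hfin.insert _, hx, by simp [Set.image_insert_eq]⟩⟩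
    · obtain ⟨S₀, hfin, hS₀, rfl⟩ := hS
      obtain ⟨w, hw⟩ := hS₀.2 x
      exact ⟨sumLexSubtype X _ w, ih ⟨_, hfin.insert _, hw, by simp [Set.image_insert_eq]⟩⟩

theorem windowWins_zero (n : ℕ) {s : Set X} (hs : s.Finite) :
    WindowWins X n 0 ((fun x => (toLex (Sum.inl x : X ⊕ ℤ ×ₗ Y), x)) '' s) := by
  refine ⟨(fun x => (toLex (Sum.inl x), x)) '' s, hs.image _,
    (DuplicatorWins.graph_orderIso OrderIso.sumLexEmpty n).anti ?_, by simp [Set.image_image]⟩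
  rintro _ ⟨x, -, rfl⟩
  rfl

end Window

theorem stmt4_general (X Y : Type u) [LinearOrder X] [LinearOrder Y]
    (h : IsElemInclusion Language.order X (X ⊕ₗ Y) (fun x => toLex (Sum.inl x))) :
    IsElemInclusion Language.order X (X ⊕ₗ (ℤ ×ₗ Y)) (fun x => toLex (Sum.inl x)) := by
  intro m φ v
  obtain ⟨n, hn⟩ := exists_realize_iff_of_duplicatorWins φ
  have hS := (windowWins_zero (Y := Y) n (Set.finite_range v)).duplicatorWins h.isGameElementary
  exact hn hS (fun i => ⟨v i, ⟨i, rfl⟩, rfl⟩) finZeroElim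

/-- If the natural inclusion of `X` into `X + Y` is elementary (with `Y` non-empty), then so is
the natural inclusion of `X` into `X + Σ_ζ Y`, where `Σ_ζ Y` is the sum of ℤ-many copies
of `Y`. -/
theorem stmt4 (X Y : Type u) [LinearOrder X] [LinearOrder Y] (hY : Nonempty Y)
    (h : IsElemInclusion Language.order X (X ⊕ₗ Y) (fun x => toLex (Sum.inl x))) :
    IsElemInclusion Language.order X (X ⊕ₗ (ℤ ×ₗ Y)) (fun x => toLex (Sum.inl x)) :=
  stmt4_general X Y h
end

section
/- Consider an exact sequence of abelian groups 0 → A → B → C → 0 in which A is pure in B (every element of A that is n-divisible in B is n-divisible in A, for every n) and A is ℵ₁-saturated as a first-order structure. Then the sequence splits: B ≅ A × C. -/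
/-!
The sequence splits as soon as `i` has a retraction `B → A`. We build one by Zorn's lemma on
partial homomorphisms `f : G → A` (with `G ⊇ A`) that carry every finite linear system with
constants in `G` solvable in `B` to one solvable in `A`. For `G = A` this is purity, via Smith
normal form; the property passes to directed unions; and `f` extends to `G + ℤ b` by sending `b`
to an `a` satisfying, over `f`, every system that `b` satisfies over `G`. Such an `a` exists by
`ℵ₁`-saturation: systems come in countably many shapes, so it suffices to fix one tuple of
constants for each shape (finite satisfiability is the invariant applied to a block system); any
other tuple of the same shape differs from the fixed one by constants to which the invariant
applies.
-/

open FirstOrder Language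

universe u

/-- Function symbols of the language of abelian groups: a constant `0` and a binary `+`. -/
def abFunctions : ℕ → Type
  | 0 => Unit
  | 2 => Unit
  | _ => Empty

/-- The first-order language `{+, 0}` of abelian groups. -/
def abLang : FirstOrder.Language := ⟨abFunctions, fun _ => Empty⟩

/-- Any additive group is naturally an `abLang`-structure. -/
instance abStructure (M : Type*) [AddCommGroup M] : abLang.Structure M where
  funMap := fun {n} f x =>
    match n, f, x with
    | 0, _, _ => 0
    | 1, f, _ => f.elim
    | 2, _, x => x 0 + x 1
    | (_ + 3), f, _ => f.elim
  RelMap := fun r _ => r.elim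

/-- `M` is `ℵ₁`-saturated: every finitely satisfiable set of formulas in one free variable with
countably many parameters from `M` is realized in `M`. -/
def AlephOneSaturated (L : FirstOrder.Language) (M : Type*) [L.Structure M] : Prop :=
  ∀ (α : Type) (_ : Countable α) (xs : α → M) (S : Set (L.Formula (α ⊕ Unit))),
    (∀ F : Finset (L.Formula (α ⊕ Unit)), ↑F ⊆ S →
        ∃ m : M, ∀ φ ∈ F, φ.Realize (Sum.elim xs fun _ => m)) →
      ∃ m : M, ∀ φ ∈ S, φ.Realize (Sum.elim xs fun _ => m)

namespace LinearMap

variable {R M N P : Type*} [Ring R] [AddCommGroup M] [AddCommGroup N] [AddCommGroup P]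
  [Module R M] [Module R N] [Module R P]

noncomputable def rangeLift (f : M →ₗ[R] N) (g : M →ₗ[R] P) (h : ker f ≤ ker g) :
    range f →ₗ[R] P :=
  (ker f).liftQ g h ∘ₗ f.quotKerEquivRange.symm.toLinearMap

theorem rangeLift_apply (f : M →ₗ[R] N) (g : M →ₗ[R] P) (h : ker f ≤ ker g) (x : M)
    (hx : f x ∈ range f) : rangeLift f g h ⟨f x, hx⟩ = g x := by
  simp [rangeLift, quotKerEquivRange_symm_apply_image]

end LinearMap

namespace LinearPMap

variable {R E F : Type*} [Ring R] [AddCommGroup E] [Module R E] [AddCommGroup F] [Module R F]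

noncomputable def spanSingletonCover (f : E →ₗ.[R] F) (x : E) : f.domain × R →ₗ[R] E :=
  f.domain.subtype.coprod (LinearMap.toSpanSingleton R E x)

/-- The hypothesis is what makes `e + r • x ↦ f e + r • y` well defined. -/
noncomputable def extendSpanSingleton (f : E →ₗ.[R] F) (x : E) (y : F)
    (h : ∀ (r : R) (hr : r • x ∈ f.domain), f ⟨r • x, hr⟩ = r • y) :
    E →ₗ.[R] F where
  domain := LinearMap.range (f.spanSingletonCover x)
  toFun := LinearMap.rangeLift _ (f.toFun.coprod (LinearMap.toSpanSingleton R F y)) <| by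
    rintro ⟨e, r⟩ (he : (e : E) + r • x = 0)
    have hr : r • x = -(e : E) := eq_neg_of_add_eq_zero_right he
    have hrx : r • x ∈ f.domain := hr ▸ neg_mem e.2
    have : f ⟨r • x, hrx⟩ = -f e := by rw [← map_neg]; congr 1; exact Subtype.ext hr
    simp only [LinearMap.mem_ker, LinearMap.coprod_apply, LinearMap.toSpanSingleton_apply]
    rw [← h r hrx, this]; exact add_neg_cancel _

variable {f : E →ₗ.[R] F} {x : E} {y : F}
  {h : ∀ (r : R) (hr : r • x ∈ f.domain), f ⟨r • x, hr⟩ = r • y}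

theorem extendSpanSingleton_apply (e : f.domain) (r : R)
    (he : (e : E) + r • x ∈ (f.extendSpanSingleton x y h).domain) :
    f.extendSpanSingleton x y h ⟨e + r • x, he⟩ = f e + r • y :=
  LinearMap.rangeLift_apply (f.spanSingletonCover x) _ _ (e, r) he

theorem mem_domain_extendSpanSingleton_iff {z : E} :
    z ∈ (f.extendSpanSingleton x y h).domain ↔
      ∃ (e : f.domain) (r : R), (e : E) + r • x = z := by
  simp [extendSpanSingleton, spanSingletonCover]

theorem mem_domain_extendSpanSingleton : x ∈ (f.extendSpanSingleton x y h).domain :=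
  mem_domain_extendSpanSingleton_iff.2 ⟨0, 1, by simp⟩

theorem le_extendSpanSingleton : f ≤ f.extendSpanSingleton x y h := by
  refine ⟨fun z hz => mem_domain_extendSpanSingleton_iff.2 ⟨⟨z, hz⟩, 0, by simp⟩, ?_⟩
  rintro e ⟨z, hz⟩ (rfl : (e : E) = z)
  have := extendSpanSingleton_apply (h := h) e 0 (by simpa using hz)
  simp only [zero_smul, add_zero] at this
  exact this.symm

end LinearPMap

namespace Matrix

variable {R V X : Type*} [Fintype V] [AddCommGroup X]

def HasSolution (M : Matrix R V ℤ) (c : R → X) : Prop :=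
  ∃ z : V → X, ∀ r, ∑ j, M r j • z j = c r

variable {M : Matrix R V ℤ} {c c' : R → X}

theorem HasSolution.add (h : M.HasSolution c) (h' : M.HasSolution c') : M.HasSolution (c + c') := by
  obtain ⟨z, hz⟩ := h
  obtain ⟨z', hz'⟩ := h'
  exact ⟨z + z', fun r => by simp [smul_add, Finset.sum_add_distrib, hz, hz']⟩

theorem HasSolution.sub (h : M.HasSolution c) (h' : M.HasSolution c') : M.HasSolution (c - c') := by
  obtain ⟨z, hz⟩ := h
  obtain ⟨z', hz'⟩ := h'
  exact ⟨z - z', fun r => by simp [smul_sub, Finset.sum_sub_distrib, hz, hz']⟩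

theorem hasSolution_reindex_iff {R' V' : Type*} [Fintype V'] (eR : R ≃ R') (eV : V ≃ V') :
    (M.reindex eR eV).HasSolution (c ∘ eR.symm) ↔ M.HasSolution c := by
  constructor
  · rintro ⟨z, hz⟩
    refine ⟨z ∘ eV, fun r => ?_⟩
    simpa [← eV.symm.sum_comp] using hz (eR r)
  · rintro ⟨z, hz⟩
    refine ⟨z ∘ eV.symm, fun r => ?_⟩
    simpa [← eV.symm.sum_comp] using hz (eR.symm r)

theorem hasSolution_fromCols_iff (n : R → ℤ) :
    HasSolution (M.fromCols (replicateCol Unit (-n))) c ↔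
      ∃ x : X, M.HasSolution (fun r => c r + n r • x) := by
  simp only [HasSolution, Fintype.sum_sum_type, fromCols_apply_inl,
    fromCols_apply_inr, replicateCol_apply, Finset.univ_unique,
    Finset.sum_singleton, Pi.neg_apply, neg_smul, ← sub_eq_add_neg, sub_eq_iff_eq_add]
  constructor
  · rintro ⟨z, hz⟩
    exact ⟨z (Sum.inr ()), z ∘ Sum.inl, hz⟩
  · rintro ⟨x, z, hz⟩
    exact ⟨Sum.elim z fun _ => x, hz⟩

theorem hasSolution_blockDiagonal'_iff {ι : Type*} [Fintype ι] [DecidableEq ι]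
    {m k : ι → Type*} [∀ i, Fintype (k i)] (M : ∀ i, Matrix (m i) (k i) ℤ)
    (c : (Σ i, m i) → X) :
    HasSolution (blockDiagonal' M) c ↔ ∀ i, HasSolution (M i) (fun r => c ⟨i, r⟩) := by
  have hsum : ∀ (z : (Σ i, k i) → X) (i : ι) (r : m i),
      ∑ p, blockDiagonal' M ⟨i, r⟩ p • z p = ∑ j, M i r j • z ⟨i, j⟩ := by
    intro z i r
    rw [Fintype.sum_sigma, Finset.sum_eq_single i (fun i' _ hi' => by
      simp [blockDiagonal'_apply_ne M _ _ (Ne.symm hi')]) (by simp)]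
    simp [blockDiagonal'_apply_eq]
  simp only [HasSolution, hsum]
  constructor
  · rintro ⟨z, hz⟩ i
    exact ⟨fun j => z ⟨i, j⟩, fun r => hz ⟨i, r⟩⟩
  · intro h
    choose z hz using h
    exact ⟨fun p => z p.1 p.2, fun p => hz p.1 p.2⟩

end Matrix

namespace AddMonoidHom

variable {A B : Type*} [AddCommGroup A] [AddCommGroup B]

def IsPure (i : A →+ B) : Prop :=
  ∀ (n : ℕ) (a : A), (∃ b : B, n • b = i a) → ∃ a' : A, n • a' = a

variable {i : A →+ B}

theorem IsPure.exists_zsmul_eq (hp : i.IsPure) {z : ℤ} {a : A} (h : ∃ b : B, z • b = i a) :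
    ∃ a' : A, z • a' = a := by
  obtain ⟨b, hb⟩ := h
  rcases Int.natAbs_eq z with hz | hz
  · obtain ⟨a', ha'⟩ := hp z.natAbs a ⟨b, by rwa [← natCast_zsmul, ← hz]⟩
    exact ⟨a', by rwa [hz, natCast_zsmul]⟩
  · obtain ⟨a', ha'⟩ := hp z.natAbs a
      ⟨-b, by rwa [← natCast_zsmul, smul_neg, ← neg_smul, ← hz]⟩
    exact ⟨-a', by rwa [hz, neg_smul, smul_neg, neg_neg, natCast_zsmul]⟩

/-- Write `N` in Smith normal form `bN k = d k • bM (σ k)` and divide `h (bN k)` by `d k`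
in `A`. -/
theorem IsPure.exists_extend {ι F : Type*} [Finite ι] [AddCommGroup F] (hp : i.IsPure)
    (bF : Module.Basis ι ℤ F) {N : Submodule ℤ F} (h : N →ₗ[ℤ] A) (φ : F →ₗ[ℤ] B)
    (hφ : ∀ ν : N, φ ν = i (h ν)) : ∃ ψ : F →ₗ[ℤ] A, ∀ ν : N, ψ ν = h ν := by
  obtain ⟨n, bM, bN, σ, d, hsnf⟩ := N.smithNormalForm bF
  have hdiv : ∀ k, ∃ a : A, d k • a = h (bN k) := fun k =>
    hp.exists_zsmul_eq ⟨φ (bM (σ k)), by rw [← hφ, hsnf, map_zsmul]⟩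
  choose y hy using hdiv
  refine ⟨bM.constr ℤ (Function.extend σ y 0), fun ν => ?_⟩
  have : (bM.constr ℤ (Function.extend σ y 0)) ∘ₗ N.subtype = h := bN.ext fun k => by
    simp [hsnf, σ.injective.extend_apply, hy]
  exact LinearMap.congr_fun this ν

theorem IsPure.hasSolution_of_map {R V : Type*} [Fintype R] [Fintype V] (hi : Function.Injective i)
    (hp : i.IsPure) {M : Matrix R V ℤ} {c : R → A} (h : M.HasSolution (fun r => i (c r))) :
    M.HasSolution c := by
  classical
  obtain ⟨z, hz⟩ := h
  -- A solution `z'` in `A` is a map `ψ : ℤ^V → A` with `ψ ∘ μ = g`, where `μ e_r = M r`.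
  let μ : (R → ℤ) →ₗ[ℤ] V → ℤ := M.vecMulLinear
  let g : (R → ℤ) →ₗ[ℤ] A := Fintype.linearCombination ℤ c
  let φ : (V → ℤ) →ₗ[ℤ] B := Fintype.linearCombination ℤ z
  have hφμ : ∀ w, φ (μ w) = i (g w) := by
    intro w
    simp only [μ, g, φ, Fintype.linearCombination_apply, Matrix.vecMulLinear_apply,
      Matrix.vecMul, dotProduct, Finset.sum_smul, mul_smul, map_sum, map_zsmul, ← hz,
      Finset.smul_sum]
    exact Finset.sum_comm
  have hker : LinearMap.ker μ ≤ LinearMap.ker g := fun w hw => hi <| by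
    rw [map_zero, ← hφμ, LinearMap.mem_ker.1 hw, map_zero]
  obtain ⟨ψ, hψ⟩ := hp.exists_extend (Pi.basisFun ℤ V) (μ.rangeLift g hker) φ <| by
    intro ν
    obtain ⟨w, hw⟩ := LinearMap.mem_range.1 ν.2
    obtain rfl : ν = ⟨μ w, LinearMap.mem_range_self μ w⟩ := Subtype.ext hw.symm
    rw [LinearMap.rangeLift_apply, hφμ]
  refine ⟨fun j => ψ (Pi.basisFun ℤ V j), fun r => ?_⟩
  have hrow : μ (Pi.single r 1) = M r := Matrix.single_one_vecMul r M
  calc ∑ j, M r j • ψ (Pi.basisFun ℤ V j)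
      = ψ (M r) := by
        conv_rhs => rw [← (Pi.basisFun ℤ V).sum_repr (M r)]
        simp only [map_sum, map_zsmul, Pi.basisFun_repr]
    _ = g (Pi.single r 1) := by
        rw [← hrow, ← LinearMap.rangeLift_apply μ g hker _ (LinearMap.mem_range_self μ _)]
        exact hψ ⟨_, LinearMap.mem_range_self μ _⟩
    _ = c r := by simp [g]

end AddMonoidHom

namespace AbLang

variable {β : Type*}

def zeroTerm : abLang.Term β := Term.func (l := 0) () ![]

def addTerm (t s : abLang.Term β) : abLang.Term β := Term.func (l := 2) () ![t, s]

def nsmulTerm : ℕ → abLang.Term β → abLang.Term β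
  | 0, _ => zeroTerm
  | n + 1, t => addTerm (nsmulTerm n t) t

noncomputable def natCombTerm {ι : Type*} [Fintype ι] (a : ι → ℕ)
    (t : ι → abLang.Term β) : abLang.Term β :=
  Finset.univ.toList.foldr (fun i s => addTerm (nsmulTerm (a i) (t i)) s) zeroTerm

/-- The language has no subtraction: terms with negative coefficient are moved to the right. -/
noncomputable def linEqFormula {ι : Type*} [Fintype ι] (a : ι → ℤ)
    (t : ι → abLang.Term β) (s : abLang.Term β) : abLang.Formula β :=
  (natCombTerm (fun i => (a i).toNat) t).equal (addTerm (natCombTerm (fun i => (-a i).toNat) t) s)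

noncomputable def hasSolutionFormula {R V : Type*} [Finite R] [Fintype V] (M : Matrix R V ℤ)
    (n : R → ℤ) (c : R → β) (x : β) : abLang.Formula β :=
  Formula.iExs V <| Formula.iInf fun r =>
    linEqFormula (Sum.elim (M r) fun _ => -n r)
      (Sum.elim (fun j => Term.var (Sum.inr j)) fun _ : Unit => Term.var (Sum.inl x))
      (Term.var (Sum.inl (c r)))

variable {X : Type*} [AddCommGroup X] (v : β → X)

@[simp]
theorem realize_zeroTerm : (zeroTerm : abLang.Term β).realize v = 0 := rfl

@[simp]
theorem realize_addTerm (t s : abLang.Term β) :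
    (addTerm t s).realize v = t.realize v + s.realize v := rfl

@[simp]
theorem realize_nsmulTerm (n : ℕ) (t : abLang.Term β) :
    (nsmulTerm n t).realize v = n • t.realize v := by
  induction n with
  | zero => simp [nsmulTerm]
  | succ n ih => simp [nsmulTerm, ih, succ_nsmul]

@[simp]
theorem realize_natCombTerm {ι : Type*} [Fintype ι] (a : ι → ℕ) (t : ι → abLang.Term β) :
    (natCombTerm a t).realize v = ∑ i, a i • (t i).realize v := by
  rw [natCombTerm, ← Finset.sum_map_toList]
  induction (Finset.univ : Finset ι).toList with
  | nil => simp
  | cons i l ih => simp [ih]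

theorem realize_linEqFormula {ι : Type*} [Fintype ι] (a : ι → ℤ) (t : ι → abLang.Term β)
    (s : abLang.Term β) :
    (linEqFormula a t s).Realize v ↔ ∑ i, a i • (t i).realize v = s.realize v := by
  have hsplit : ∑ i, a i • (t i).realize v =
      ∑ i, (a i).toNat • (t i).realize v - ∑ i, (-a i).toNat • (t i).realize v := by
    rw [← Finset.sum_sub_distrib]
    refine Finset.sum_congr rfl fun i _ => ?_
    rw [← natCast_zsmul, ← natCast_zsmul, ← sub_smul, Int.toNat_sub_toNat_neg]
  rw [linEqFormula, Formula.realize_equal, hsplit, sub_eq_iff_eq_add']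
  simp

theorem realize_hasSolutionFormula {R V : Type*} [Finite R] [Fintype V] (M : Matrix R V ℤ)
    (n : R → ℤ) (c : R → β) (x : β) :
    (hasSolutionFormula M n c x).Realize v ↔ M.HasSolution (fun r => v (c r) + n r • v x) := by
  simp only [hasSolutionFormula, Formula.realize_iExs, Formula.realize_iInf, realize_linEqFormula,
    Fintype.sum_sum_type, Sum.elim_inl, Sum.elim_inr, Term.realize_var, Finset.univ_unique,
    Finset.sum_singleton, neg_smul, ← sub_eq_add_neg, sub_eq_iff_eq_add, Matrix.HasSolution]

end AbLang

namespace LinearPMap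

variable {A B : Type*} [AddCommGroup A] [AddCommGroup B] {f : B →ₗ.[ℤ] A}

def PreservesSolutions (f : B →ₗ.[ℤ] A) : Prop :=
  ∀ {R V : Type} [Fintype R] [Fintype V] (M : Matrix R V ℤ) (c : R → f.domain),
    M.HasSolution (fun r => (c r : B)) → M.HasSolution (fun r => f (c r))

def PreservesSolutionsAt (f : B →ₗ.[ℤ] A) (b : B) (a : A) : Prop :=
  ∀ {R V : Type} [Fintype R] [Fintype V] (M : Matrix R V ℤ) (n : R → ℤ)
    (c : R → f.domain), M.HasSolution (fun r => (c r : B) + n r • b) →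
      M.HasSolution (fun r => f (c r) + n r • a)

theorem PreservesSolutions.exists_hasSolution_add_smul (hf : f.PreservesSolutions)
    {R V : Type} [Fintype R] [Fintype V] {M : Matrix R V ℤ} {n : R → ℤ} {c : R → f.domain}
    (h : ∃ x : B, M.HasSolution (fun r => (c r : B) + n r • x)) :
    ∃ a : A, M.HasSolution (fun r => f (c r) + n r • a) :=
  (M.hasSolution_fromCols_iff n).1 (hf _ c ((M.hasSolution_fromCols_iff n).2 h))

theorem PreservesSolutions.exists_forall_hasSolution (hf : f.PreservesSolutions)
    {ι : Type} [Fintype ι] {m k : ι → Type} [∀ i, Fintype (m i)] [∀ i, Fintype (k i)]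
    {M : ∀ i, Matrix (m i) (k i) ℤ} {n : ∀ i, m i → ℤ} {c : ∀ i, m i → f.domain}
    (h : ∃ x : B, ∀ i, (M i).HasSolution (fun r => (c i r : B) + n i r • x)) :
    ∃ a : A, ∀ i, (M i).HasSolution (fun r => f (c i r) + n i r • a) := by
  classical
  obtain ⟨x, hx⟩ := h
  obtain ⟨a, ha⟩ := hf.exists_hasSolution_add_smul (M := Matrix.blockDiagonal' M)
    (n := fun p => n p.1 p.2) (c := fun p => c p.1 p.2)
    ⟨x, (Matrix.hasSolution_blockDiagonal'_iff M _).2 hx⟩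
  exact ⟨a, (Matrix.hasSolution_blockDiagonal'_iff M _).1 ha⟩

theorem PreservesSolutions.hasSolution_add_smul_of_witness (hf : f.PreservesSolutions) {b : B}
    {a : A} {R V : Type} [Fintype R] [Fintype V] {M : Matrix R V ℤ} {n : R → ℤ}
    {c w : R → f.domain} (hc : M.HasSolution fun r => (c r : B) + n r • b)
    (hw : M.HasSolution fun r => (w r : B) + n r • b)
    (hwa : M.HasSolution fun r => f (w r) + n r • a) :
    M.HasSolution fun r => f (c r) + n r • a := by
  have hdiff : M.HasSolution fun r => ((c - w) r : B) := by
    convert hc.sub hw using 1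
    funext r
    simp
  convert (hf M (c - w) hdiff).add hwa using 1
  funext r
  simp only [Pi.sub_apply, Pi.add_apply, LinearPMap.map_sub]
  abel

theorem PreservesSolutionsAt.apply_smul {b : B} {a : A} (hab : f.PreservesSolutionsAt b a) (r : ℤ)
    (hr : r • b ∈ f.domain) : f ⟨r • b, hr⟩ = r • a := by
  have hb : (0 : Matrix Unit Empty ℤ).HasSolution
      (fun _ => ((-⟨r • b, hr⟩ : f.domain) : B) + r • b) := ⟨0, fun _ => by simp⟩
  obtain ⟨_, hz⟩ := hab 0 (fun _ => r) (fun _ => -⟨r • b, hr⟩) hb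
  have := hz ()
  simp only [Finset.univ_eq_empty, Finset.sum_empty, map_neg] at this
  exact neg_add_eq_zero.1 this.symm

theorem PreservesSolutionsAt.preservesSolutions_extendSpanSingleton {b : B} {a : A}
    (hab : f.PreservesSolutionsAt b a) :
    (f.extendSpanSingleton b a hab.apply_smul).PreservesSolutions := by
  intro R V _ _ M c hc
  choose e n hen using fun r => mem_domain_extendSpanSingleton_iff.1 (c r).2
  have hval : ∀ r, f.extendSpanSingleton b a hab.apply_smul (c r) = f (e r) + n r • a := by
    intro r
    rw [← extendSpanSingleton_apply (e r) (n r) (hen r ▸ (c r).2)]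
    exact congrArg _ (Subtype.ext (hen r).symm)
  simp only [hval]
  exact hab M n e (by simpa only [hen] using hc)

theorem PreservesSolutions.sSup {c : Set (B →ₗ.[ℤ] A)} (hne : c.Nonempty)
    (hc : DirectedOn (· ≤ ·) c) (h : ∀ g ∈ c, g.PreservesSolutions) :
    (LinearPMap.sSup c hc).PreservesSolutions := by
  intro R V _ _ M e he
  choose g hgc hge using fun r => (mem_domain_sSup_iff hne hc).1 (e r).2
  have : Nonempty c := hne.to_subtype
  obtain ⟨⟨g₀, hg₀c⟩, hg₀⟩ :=
    (directedOn_iff_directed.1 hc).finite_le fun r => (⟨g r, hgc r⟩ : c)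
  have hmem : ∀ r, (e r : B) ∈ g₀.domain := fun r => (hg₀ r).1 (hge r)
  have hval : ∀ r, LinearPMap.sSup c hc (e r) = g₀ ⟨e r, hmem r⟩ := fun r =>
    LinearPMap.sSup_apply hc hg₀c ⟨e r, hmem r⟩
  simp only [hval]
  exact h g₀ hg₀c M (fun r => ⟨e r, hmem r⟩) he

theorem PreservesSolutions.exists_preservesSolutionsAt (hsat : AlephOneSaturated abLang A)
    (hf : f.PreservesSolutions) (b : B) : ∃ a : A, f.PreservesSolutionsAt b a := by
  classical
  -- Countably many shapes; for each shape realized by `b` over `f.domain`, one tuple `wit t`.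
  let Shape := Σ m k : ℕ, Matrix (Fin m) (Fin k) ℤ × (Fin m → ℤ)
  let Holds (t : Shape) (c : Fin t.1 → f.domain) : Prop :=
    t.2.2.1.HasSolution fun r => (c r : B) + t.2.2.2 r • b
  let D : Set Shape := {t | ∃ c, Holds t c}
  let wit (t : Shape) : Fin t.1 → f.domain := if h : ∃ c, Holds t c then h.choose else 0
  have hwit : ∀ t ∈ D, Holds t (wit t) := fun t ht => by
    rw [show wit t = ht.choose from dif_pos ht]
    exact ht.choose_spec
  let param (p : Σ t : Shape, Fin t.1) : A := f (wit p.1 p.2)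
  let φ (t : Shape) : abLang.Formula ((Σ t : Shape, Fin t.1) ⊕ Unit) :=
    AbLang.hasSolutionFormula t.2.2.1 t.2.2.2 (fun r => Sum.inl ⟨t, r⟩) (Sum.inr ())
  have hφ : ∀ t a, (φ t).Realize (Sum.elim param fun _ => a) ↔
      t.2.2.1.HasSolution fun r => f (wit t r) + t.2.2.2 r • a := fun t a =>
    AbLang.realize_hasSolutionFormula _ _ _ _ _
  have : Countable (Σ t : Shape, Fin t.1) := by dsimp only [Shape, Matrix]; infer_instance
  obtain ⟨a, ha⟩ := hsat _ this param (φ '' D) <| by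
    intro F hF
    choose t htD htφ using fun ψ : F => hF ψ.2
    obtain ⟨a, ha⟩ := hf.exists_forall_hasSolution (M := fun ψ => (t ψ).2.2.1)
      (n := fun ψ => (t ψ).2.2.2) (c := fun ψ => wit (t ψ)) ⟨b, fun ψ => hwit _ (htD ψ)⟩
    refine ⟨a, fun ψ hψ => ?_⟩
    rw [← show φ (t ⟨ψ, hψ⟩) = ψ from htφ ⟨ψ, hψ⟩, hφ]
    exact ha ⟨ψ, hψ⟩
  refine ⟨a, fun {R V} _ _ M n c hc => ?_⟩
  let eR := Fintype.equivFin R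
  let eV := Fintype.equivFin V
  let t : Shape := ⟨_, _, M.reindex eR eV, n ∘ eR.symm⟩
  have htc : Holds t (c ∘ eR.symm) := (Matrix.hasSolution_reindex_iff eR eV).2 hc
  refine (Matrix.hasSolution_reindex_iff eR eV).1 (hf.hasSolution_add_smul_of_witness htc
    (hwit t ⟨_, htc⟩) ((hφ t a).1 (ha (φ t) ⟨t, ⟨_, htc⟩, rfl⟩)))

end LinearPMap

namespace AddMonoidHom

variable {A B : Type*} [AddCommGroup A] [AddCommGroup B] {i : A →+ B}

theorem IsPure.exists_retraction (hi : Function.Injective i) (hp : i.IsPure)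
    (hsat : AlephOneSaturated abLang A) :
    ∃ ρ : B →ₗ[ℤ] A, ρ ∘ₗ i.toIntLinearMap = LinearMap.id := by
  let i' := i.toIntLinearMap
  have hker : LinearMap.ker i' ≤ LinearMap.ker (LinearMap.id : A →ₗ[ℤ] A) := by
    rw [LinearMap.ker_eq_bot.2 hi]
    exact bot_le
  let f₀ : B →ₗ.[ℤ] A := ⟨LinearMap.range i', LinearMap.rangeLift i' LinearMap.id hker⟩
  have hf₀ : ∀ a, f₀ ⟨i a, LinearMap.mem_range_self i' a⟩ = a := fun a =>
    LinearMap.rangeLift_apply i' LinearMap.id hker a _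
  have hf₀S : f₀.PreservesSolutions := by
    intro R V _ _ M c hc
    choose a ha using fun r => LinearMap.mem_range.1 (c r).2
    obtain rfl : c = fun r => ⟨i (a r), LinearMap.mem_range_self i' (a r)⟩ :=
      funext fun r => Subtype.ext (ha r).symm
    simpa only [hf₀] using hp.hasSolution_of_map hi hc
  obtain ⟨m, hf₀m, hm⟩ := zorn_le_nonempty₀ {f : B →ₗ.[ℤ] A | f.PreservesSolutions}
    (fun c hcS hc g hg => ⟨LinearPMap.sSup c hc.directedOn,
      LinearPMap.PreservesSolutions.sSup ⟨g, hg⟩ hc.directedOn hcS,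
      fun _ => LinearPMap.le_sSup hc.directedOn⟩) f₀ hf₀S
  have hdom : ∀ b, b ∈ m.domain := fun b => by
    obtain ⟨a, hab⟩ := LinearPMap.PreservesSolutions.exists_preservesSolutionsAt hsat hm.prop b
    exact (hm.2 hab.preservesSolutions_extendSpanSingleton
      LinearPMap.le_extendSpanSingleton).1 LinearPMap.mem_domain_extendSpanSingleton
  exact ⟨m.toFun ∘ₗ LinearMap.codRestrict m.domain LinearMap.id hdom,
    LinearMap.ext fun a => (hf₀m.2 rfl).symm.trans (hf₀ a)⟩

end AddMonoidHom

/-- An exact sequence `0 → A → B → C → 0` of abelian groups in which `A` is pure in `B` and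
`A` is `ℵ₁`-saturated splits: `B ≅ A × C` compatibly with the maps. -/
theorem stmt7 (A B C : Type u) [AddCommGroup A] [AddCommGroup B] [AddCommGroup C]
    (i : A →+ B) (π : B →+ C) (hi : Function.Injective i) (hπ : Function.Surjective π)
    (hexact : ∀ b : B, π b = 0 ↔ ∃ a : A, i a = b)
    (hpure : ∀ (n : ℕ) (a : A), (∃ b : B, n • b = i a) → ∃ a' : A, n • a' = a)
    (hsat : AlephOneSaturated abLang A) :
    ∃ e : B ≃+ A × C, (∀ a : A, e (i a) = (a, 0)) ∧ ∀ b : B, (e b).2 = π b := by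
  obtain ⟨ρ, hρ⟩ := AddMonoidHom.IsPure.exists_retraction hi hpure hsat
  have hex : Function.Exact i.toIntLinearMap π.toIntLinearMap := hexact
  obtain ⟨e, hei, heπ⟩ := hex.splitInjectiveEquiv hπ ⟨ρ, hρ⟩
  refine ⟨e.toAddEquiv, fun a => ?_, fun b => (LinearMap.congr_fun heπ b).symm⟩
  rw [show i a = e.symm (a, 0) from LinearMap.congr_fun hei a]
  exact e.apply_symm_apply (a, 0)
end
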